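/- Let m ≥ 2 and let ϑ be the degree-m random metallic mean substitution a ↦ {aⁱ b a^{m−i} : 0 ≤ i ≤ m}, b ↦ {a}, with S_m = {aⁱ b a^{m−i} : 0 ≤ i ≤ m}. If ϑᵖ(a)·u·S_m contains a ϑ-legal word for some word u, then for every 0 ≤ j ≤ m the set ϑᵖ(a)·ϑ(u)·(ϑ(b))ʲ·S_m contains a ϑ-legal word. -/

import Mathlib

/-- Two-letter alphabet. -/
inductive AB : Type
  | a : AB
  | b : AB
deriving DecidableEq

/-- Extension of a random substitution to words, by setwise concatenation. -/
def substW (θ : AB → Set (List AB)) : List AB → Set (List AB)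
  | [] => {[]}
  | x :: w => {u | ∃ v ∈ θ x, ∃ t ∈ substW θ w, u = v ++ t}

/-- Extension of a random substitution to sets of words. -/
def substS (θ : AB → Set (List AB)) (A : Set (List AB)) : Set (List AB) :=
  ⋃ w ∈ A, substW θ w

/-- Level-`n` inflation words of the letter `x`. -/
def substIter (θ : AB → Set (List AB)) (n : ℕ) (x : AB) : Set (List AB) :=
  (substS θ)^[n] {[x]}

/-- A word is legal if it is a subword of some level-`k` inflation word. -/
def legalW (θ : AB → Set (List AB)) (u : List AB) : Prop :=
  ∃ (k : ℕ) (x : AB), ∃ w ∈ substIter θ k x, u <:+: w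

/-- The random Fibonacci substitution a ↦ {ab, ba}, b ↦ {a}. -/
def randFib : AB → Set (List AB)
  | AB.a => {[AB.a, AB.b], [AB.b, AB.a]}
  | AB.b => {[AB.a]}

/-- The degree-`m` random metallic mean substitution
`a ↦ {aⁱ b a^(m-i) : 0 ≤ i ≤ m}`, `b ↦ {a}`. -/
def randMet (m : ℕ) : AB → Set (List AB)
  | AB.a => {w | ∃ i ≤ m,
      w = List.replicate i AB.a ++ AB.b :: List.replicate (m - i) AB.a}
  | AB.b => {[AB.a]}

/-- `j`-fold setwise concatenation of a set of words with itself. -/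
def setNPow (A : Set (List AB)) : ℕ → Set (List AB)
  | 0 => {[]}
  | j + 1 => {w | ∃ u ∈ setNPow A j, ∃ v ∈ A, w = u ++ v}

/-!
Substituting the legal word `v ++ u ++ s` once more keeps it legal, so it suffices to choose the
images of `v`, `u` and `s` well. Every `v ∈ ϑᵖ(a)` has an image ending with some `v' ∈ ϑᵖ(a)`,
by strong induction on `p`. For `m ≥ 2` every `s ∈ S_m` has an image beginning with `aᵐbaᵐ`,
and this word begins with `aʲ·aᵐ⁻ʲbaʲ ∈ (ϑ(b))ʲ·S_m`.
-/

open AB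

def substIterW (θ : AB → Set (List AB)) (n : ℕ) (w : List AB) : Set (List AB) :=
  (substS θ)^[n] {w}

theorem replicate_append_cons_self {α : Type*} (n : ℕ) (x : α) (l : List α) :
    List.replicate n x ++ x :: l = x :: (List.replicate n x ++ l) := by
  rw [← List.singleton_append, ← List.append_assoc, ← List.replicate_succ']
  rfl

section General

variable {θ : AB → Set (List AB)}

theorem mem_substW_singleton {x : AB} {y : List AB} : y ∈ substW θ [x] ↔ y ∈ θ x := by
  simp [substW]

theorem mem_substW_append {w₁ w₂ y : List AB} :
    y ∈ substW θ (w₁ ++ w₂) ↔ ∃ y₁ ∈ substW θ w₁, ∃ y₂ ∈ substW θ w₂, y = y₁ ++ y₂ := by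
  induction w₁ generalizing y with
  | nil => simp [substW]
  | cons x w ih =>
    simp only [List.cons_append, substW, Set.mem_ofPred_eq, ih]
    aesop

theorem substW_nonempty (hθ : ∀ x, (θ x).Nonempty) (w : List AB) : (substW θ w).Nonempty := by
  induction w with
  | nil => exact ⟨[], rfl⟩
  | cons x w ih =>
    obtain ⟨v, hv⟩ := hθ x
    obtain ⟨t, ht⟩ := ih
    exact ⟨v ++ t, v, hv, t, ht, rfl⟩

theorem substS_singleton (w : List AB) : substS θ {w} = substW θ w := by
  simp [substS]

theorem iterate_substS_eq_biUnion (n : ℕ) (A : Set (List AB)) :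
    (substS θ)^[n] A = ⋃ w ∈ A, substIterW θ n w := by
  induction n generalizing A with
  | zero => simp [substIterW]
  | succ n ih =>
    have hw (w : List AB) : substIterW θ (n + 1) w = ⋃ y ∈ substW θ w, substIterW θ n y := by
      rw [substIterW, Function.iterate_succ_apply, substS_singleton, ih]
    rw [Function.iterate_succ_apply, ih, substS]
    simp only [hw, Set.biUnion_iUnion]

theorem substIter_eq_substIterW (n : ℕ) (x : AB) : substIter θ n x = substIterW θ n [x] := rfl

theorem mem_substIterW_succ {n : ℕ} {w v : List AB} :
    v ∈ substIterW θ (n + 1) w ↔ ∃ y ∈ substW θ w, v ∈ substIterW θ n y := by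
  rw [substIterW, Function.iterate_succ_apply, substS_singleton, iterate_substS_eq_biUnion]
  simp

theorem mem_substIterW_succ' {n : ℕ} {w v : List AB} :
    v ∈ substIterW θ (n + 1) w ↔ ∃ y ∈ substIterW θ n w, v ∈ substW θ y := by
  rw [substIterW, Function.iterate_succ_apply']
  simp [substS, substIterW]

theorem mem_substIterW_append {n : ℕ} {w₁ w₂ v : List AB} :
    v ∈ substIterW θ n (w₁ ++ w₂) ↔
      ∃ v₁ ∈ substIterW θ n w₁, ∃ v₂ ∈ substIterW θ n w₂, v = v₁ ++ v₂ := by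
  induction n generalizing v with
  | zero => simp [substIterW]
  | succ n ih =>
    simp only [mem_substIterW_succ', ih]
    constructor
    · rintro ⟨-, ⟨y₁, hy₁, y₂, hy₂, rfl⟩, hv⟩
      obtain ⟨v₁, hv₁, v₂, hv₂, rfl⟩ := mem_substW_append.1 hv
      exact ⟨v₁, ⟨y₁, hy₁, hv₁⟩, v₂, ⟨y₂, hy₂, hv₂⟩, rfl⟩
    · rintro ⟨v₁, ⟨y₁, hy₁, hv₁⟩, v₂, ⟨y₂, hy₂, hv₂⟩, rfl⟩
      exact ⟨y₁ ++ y₂, ⟨y₁, hy₁, y₂, hy₂, rfl⟩, mem_substW_append.2 ⟨v₁, hv₁, v₂, hv₂, rfl⟩⟩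

theorem exists_suffix_of_mem_substIterW {n : ℕ} {w w' v : List AB}
    (hv : v ∈ substIterW θ n w) (hw : w' <:+ w) : ∃ v' ∈ substIterW θ n w', v' <:+ v := by
  obtain ⟨w₀, rfl⟩ := hw
  obtain ⟨v₀, -, v', hv', rfl⟩ := mem_substIterW_append.1 hv
  exact ⟨v', hv', v₀, rfl⟩

theorem legalW.of_infix {u v : List AB} (h : legalW θ u) (hv : v <:+: u) : legalW θ v := by
  obtain ⟨k, x, w, hw, hu⟩ := h
  exact ⟨k, x, w, hw, hv.trans hu⟩

theorem legalW.of_mem_substW (hθ : ∀ x, (θ x).Nonempty) {u V : List AB} (h : legalW θ u)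
    (hV : V ∈ substW θ u) : legalW θ V := by
  obtain ⟨k, x, w, hw, l, r, rfl⟩ := h
  obtain ⟨L, hL⟩ := substW_nonempty hθ l
  obtain ⟨R, hR⟩ := substW_nonempty hθ r
  refine ⟨k + 1, x, L ++ V ++ R, mem_substIterW_succ'.2 ⟨_, hw, ?_⟩, L, R, rfl⟩
  exact mem_substW_append.2 ⟨L ++ V, mem_substW_append.2 ⟨L, hL, V, hV, rfl⟩, R, hR, rfl⟩

def HasImageEndingIn (θ : AB → Set (List AB)) (A : Set (List AB)) (v : List AB) : Prop :=
  ∃ V ∈ substW θ v, ∃ v' ∈ A, v' <:+ V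

theorem HasImageEndingIn.of_suffix (hθ : ∀ x, (θ x).Nonempty) {A : Set (List AB)}
    {v v' : List AB} (h : HasImageEndingIn θ A v') (hv' : v' <:+ v) : HasImageEndingIn θ A v := by
  obtain ⟨V', hV', a', ha', V₁, rfl⟩ := h
  obtain ⟨v₀, rfl⟩ := hv'
  obtain ⟨V₀, hV₀⟩ := substW_nonempty hθ v₀
  exact ⟨V₀ ++ (V₁ ++ a'), mem_substW_append.2 ⟨V₀, hV₀, _, hV', rfl⟩, a', ha', V₀ ++ V₁, by simp⟩

theorem hasImageEndingIn_substIter_succ (hθ : ∀ x, (θ x).Nonempty) {n : ℕ} {x : AB}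
    {v v' : List AB} (hv' : v' ∈ substIter θ n x) (hs : v' <:+ v) :
    HasImageEndingIn θ (substIter θ (n + 1) x) v := by
  refine HasImageEndingIn.of_suffix hθ ?_ hs
  obtain ⟨V, hV⟩ := substW_nonempty hθ v'
  exact ⟨V, hV, V, mem_substIterW_succ'.2 ⟨v', hv', hV⟩, List.suffix_refl V⟩

end General

section Metallic

variable {m : ℕ}

def metWord (m i : ℕ) : List AB := List.replicate i a ++ b :: List.replicate (m - i) a

theorem mem_randMet_a {s : List AB} : s ∈ randMet m a ↔ ∃ i ≤ m, s = metWord m i := Iff.rfl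

theorem metWord_mem {i : ℕ} (hi : i ≤ m) : metWord m i ∈ randMet m a := ⟨i, hi, rfl⟩

theorem metWord_self : metWord m m = List.replicate m a ++ [b] := by
  simp [metWord]

theorem metWord_zero_append : metWord m 0 ++ [a] = [b] ++ List.replicate (m + 1) a := by
  simp [metWord, List.replicate_succ']

theorem metWord_succ_append {k : ℕ} (hk : k < m) :
    metWord m (k + 1) ++ [a] = [a] ++ metWord m k := by
  obtain ⟨l, rfl⟩ := Nat.exists_eq_add_of_lt hk
  simp [metWord, List.replicate_succ', replicate_append_cons_self,
    show k + l + 1 - k = l + 1 by omega]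

theorem singleton_suffix_metWord {i : ℕ} (hi : i < m) : [a] <:+ metWord m i := by
  obtain ⟨l, hl⟩ : ∃ l, m - i = l + 1 := ⟨m - i - 1, by omega⟩
  exact ⟨List.replicate i a ++ b :: List.replicate l a, by simp [metWord, hl, List.replicate_succ']⟩

theorem randMet_nonempty (x : AB) : (randMet m x).Nonempty := by
  cases x
  exacts [⟨_, metWord_mem (Nat.zero_le m)⟩, ⟨[a], rfl⟩]

theorem substIterW_metWord_subset {i : ℕ} (hi : i ≤ m) (n : ℕ) :
    substIterW (randMet m) n (metWord m i) ⊆ substIter (randMet m) (n + 1) a :=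
  fun _ hv => mem_substIterW_succ.2 ⟨_, mem_substW_singleton.2 (metWord_mem hi), hv⟩

theorem substIter_randMet_b_succ (n : ℕ) :
    substIter (randMet m) (n + 1) b = substIter (randMet m) n a := by
  ext v
  simp [substIter_eq_substIterW, mem_substIterW_succ, mem_substW_singleton, randMet]

theorem setNPow_randMet_b (j : ℕ) : setNPow (randMet m b) j = {List.replicate j a} := by
  induction j with
  | zero => rfl
  | succ j ih =>
    ext w
    simp only [setNPow, ih]
    simp [randMet, List.replicate_succ']

theorem cons_a_mem_substW {t T : List AB} (hT : T ∈ substW (randMet m) t) :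
    List.replicate m a ++ b :: T ∈ substW (randMet m) (a :: t) :=
  ⟨metWord m m, metWord_mem le_rfl, T, hT, by simp [metWord]⟩

theorem cons_b_a_mem_substW (hm : 1 ≤ m) {t T : List AB} (hT : T ∈ substW (randMet m) t) :
    List.replicate m a ++ b :: a :: T ∈ substW (randMet m) (b :: a :: t) := by
  obtain ⟨n, rfl⟩ := Nat.exists_eq_add_of_le' hm
  refine ⟨[a], rfl, metWord (n + 1) n ++ T, ⟨_, metWord_mem n.le_succ, T, hT, rfl⟩, ?_⟩
  simp [metWord, List.replicate_succ]

theorem exists_image_metWord_prefix (hm : 2 ≤ m) {i : ℕ} (hi : i ≤ m) :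
    ∃ S ∈ substW (randMet m) (metWord m i),
      List.replicate m a ++ b :: List.replicate m a <+: S := by
  obtain ⟨n, rfl⟩ := Nat.exists_eq_add_of_le' hm
  have hne := substW_nonempty (θ := randMet (n + 2)) randMet_nonempty
  obtain _ | _ | k := i
  · obtain ⟨R, hR⟩ := hne (List.replicate n a)
    refine ⟨_, cons_b_a_mem_substW (by omega) (cons_a_mem_substW hR), [a, b] ++ R, ?_⟩
    simp [List.replicate_succ, replicate_append_cons_self]
  · obtain ⟨R, hR⟩ := hne (List.replicate n a)
    refine ⟨_, cons_a_mem_substW (cons_b_a_mem_substW (by omega) hR), [b, a] ++ R, ?_⟩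
    simp [List.replicate_succ]
  · obtain ⟨R, hR⟩ := hne (List.replicate k a ++ b :: List.replicate (n + 2 - (k + 2)) a)
    refine ⟨_, cons_a_mem_substW (cons_a_mem_substW hR), [b] ++ R, ?_⟩
    simp [List.replicate_succ]

theorem hasImageEndingIn_of_mem_substIterW_replicate {r : ℕ}
    (ih : ∀ w ∈ substIter (randMet m) r a,
      HasImageEndingIn (randMet m) (substIter (randMet m) r a) w)
    {v : List AB} (hv : v ∈ substIterW (randMet m) r (List.replicate (m + 1) a)) :
    HasImageEndingIn (randMet m) (substIter (randMet m) (r + 2) a) v := by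
  obtain ⟨w, hw, c, hc, rfl⟩ := (mem_substIterW_append (w₁ := [a])).1 hv
  obtain ⟨W, hW, ω, hω, W₀, rfl⟩ := ih w hw
  obtain ⟨C, hC⟩ := substW_nonempty randMet_nonempty c
  refine ⟨W₀ ++ ω ++ C, mem_substW_append.2 ⟨_, hW, C, hC, rfl⟩, ω ++ C, ?_, W₀, by simp⟩
  refine substIterW_metWord_subset (Nat.zero_le m) (r + 1) ((mem_substIterW_append (w₁ := [b])).2
    ⟨ω, ?_, C, mem_substIterW_succ'.2 ⟨c, hc, hC⟩, rfl⟩)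
  rwa [← substIter_randMet_b_succ] at hω

/-- The image of `aᵐb` ends with `aⁱbaᵐ⁻ⁱ·a`. For `i ≥ 1` this has the suffix `aⁱ⁻¹baᵐ⁻ⁱ⁺¹ ∈ ϑ(a)`;
for `i = 0` it is `b·aᵐ⁺¹`, handled by the induction hypothesis one level down together with
`ϑʳ(a) = ϑʳ⁺¹(b)` and `b·aᵐ ∈ ϑ(a)`. -/
theorem hasImageEndingIn_of_mem_substIterW_metWord_self (hm : 1 ≤ m) {q : ℕ}
    (ih : ∀ r < q, ∀ w ∈ substIter (randMet m) r a,
      HasImageEndingIn (randMet m) (substIter (randMet m) r a) w)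
    {v : List AB} (hv : v ∈ substIterW (randMet m) q (metWord m m)) :
    HasImageEndingIn (randMet m) (substIter (randMet m) (q + 1) a) v := by
  obtain ⟨n, rfl⟩ := Nat.exists_eq_add_of_le' hm
  have hsplit : metWord (n + 1) (n + 1) = List.replicate n a ++ [a, b] := by
    simp [metWord_self, List.replicate_succ']
  cases q with
  | zero =>
    obtain rfl : v = metWord (n + 1) (n + 1) := hv
    refine HasImageEndingIn.of_suffix randMet_nonempty ?_ (hsplit ▸ List.suffix_append _ _)
    refine ⟨metWord (n + 1) (n + 1) ++ [a],
      ⟨_, metWord_mem le_rfl, [a], mem_substW_singleton.2 rfl, rfl⟩,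
      metWord (n + 1) n, substIterW_metWord_subset n.le_succ 0 rfl, [a], ?_⟩
    rw [← metWord_succ_append n.lt_succ_self]
  | succ r =>
    obtain ⟨y, hy, hv⟩ := mem_substIterW_succ.1 hv
    rw [hsplit] at hy
    obtain ⟨Y, -, y', ⟨s, hs, t, ht, rfl⟩, rfl⟩ := mem_substW_append.1 hy
    obtain ⟨i, hi, rfl⟩ := mem_randMet_a.1 hs
    obtain rfl : t = [a] := mem_substW_singleton.1 ht
    cases i with
    | zero =>
      rw [metWord_zero_append] at hv
      obtain ⟨v', hv', hsuf⟩ := exists_suffix_of_mem_substIterW hv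
        ((List.suffix_append _ _).trans (List.suffix_append _ _))
      exact HasImageEndingIn.of_suffix randMet_nonempty
        (hasImageEndingIn_of_mem_substIterW_replicate (ih r r.lt_succ_self) hv') hsuf
    | succ k =>
      rw [metWord_succ_append hi] at hv
      obtain ⟨v', hv', hsuf⟩ := exists_suffix_of_mem_substIterW hv
        ((List.suffix_append _ _).trans (List.suffix_append _ _))
      exact hasImageEndingIn_substIter_succ randMet_nonempty
        (substIterW_metWord_subset (by omega) r hv') hsuf

theorem hasImageEndingIn_substIter (hm : 1 ≤ m) (p : ℕ) :
    ∀ v ∈ substIter (randMet m) p a,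
      HasImageEndingIn (randMet m) (substIter (randMet m) p a) v := by
  induction p using Nat.strong_induction_on with
  | _ p ih =>
    intro v hv
    cases p with
    | zero =>
      obtain rfl : v = [a] := hv
      exact ⟨metWord m 0, mem_substW_singleton.2 (metWord_mem (Nat.zero_le m)), [a], rfl,
        singleton_suffix_metWord hm⟩
    | succ q =>
      obtain ⟨s, hs, hv⟩ := mem_substIterW_succ.1 hv
      obtain ⟨i, hi, rfl⟩ := mem_randMet_a.1 (mem_substW_singleton.1 hs)
      rcases hi.lt_or_eq with hi | rfl
      · obtain ⟨v', hv', hsuf⟩ := exists_suffix_of_mem_substIterW hv (singleton_suffix_metWord hi)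
        exact hasImageEndingIn_substIter_succ randMet_nonempty hv' hsuf
      · exact hasImageEndingIn_of_mem_substIterW_metWord_self hm (fun r hr => ih r (by omega)) hv

end Metallic

/-- Technical lemma for the degree-`m` random metallic mean substitution
(`m ≥ 2`): if `ϑᵖ(a)·u·S_m` contains a legal word, then for every `0 ≤ j ≤ m`
the set `ϑᵖ(a)·ϑ(u)·(ϑ(b))ʲ·S_m` contains a legal word, where
`S_m = {aⁱ b a^(m-i) : 0 ≤ i ≤ m} = ϑ(a)`. -/
theorem randMet_step (m : ℕ) (hm : 2 ≤ m) (p : ℕ) (u : List AB)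
    (h : ∃ v ∈ substIter (randMet m) p AB.a, ∃ s ∈ randMet m AB.a,
        legalW (randMet m) (v ++ u ++ s)) :
    ∀ j ≤ m, ∃ v ∈ substIter (randMet m) p AB.a,
      ∃ u' ∈ substW (randMet m) u,
      ∃ w ∈ setNPow (randMet m AB.b) j,
      ∃ s ∈ randMet m AB.a,
      legalW (randMet m) (v ++ u' ++ w ++ s) := by
  intro j hj
  obtain ⟨v, hv, s, hs, hlegal⟩ := h
  obtain ⟨i, hi, rfl⟩ := mem_randMet_a.1 hs
  obtain ⟨V, hV, v', hv', V₀, rfl⟩ := hasImageEndingIn_substIter (by omega) p v hv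
  obtain ⟨u', hu'⟩ := substW_nonempty randMet_nonempty u
  obtain ⟨S, hS, Z, rfl⟩ := exists_image_metWord_prefix hm hi
  have hlegal' := hlegal.of_mem_substW randMet_nonempty <|
    mem_substW_append.2 ⟨_, mem_substW_append.2 ⟨_, hV, u', hu', rfl⟩, _, hS, rfl⟩
  obtain ⟨k, rfl⟩ := Nat.exists_eq_add_of_le hj
  refine ⟨v', hv', u', hu', List.replicate j a, by rw [setNPow_randMet_b]; rfl,
    metWord (j + k) k, metWord_mem (by omega), hlegal'.of_infix ⟨V₀, List.replicate k a ++ Z, ?_⟩⟩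
  simp [metWord, List.replicate_add, -List.replicate_append_replicate]
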